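/- (Termination of the inner sampling loop of Algorithm 2.) Let L_g > 0 and suppose each gradient ∇f_i is L_g-Lipschitz continuous on ℝⁿ, for each i ∈ N there exists x_i* ∈ ℝⁿ with ∇f_i(x_i*) = 0, and x ∈ ℝⁿ, D_0 ≥ 0 satisfy max_{i ∈ N} ‖x − x_i*‖ ≤ D_0 and ‖∇²f_i(x)‖ ≤ L_g for all i ∈ N. Let ε_g, ε_H > 0, γ > 1, 0 < Δ ≤ Δ_max, and let j ∈ ℕ satisfy ε_g γ^j > 10 L_g D_0 and ε_H γ^j > 10 L_g. Set h_g := γ^{−j}(Δ/Δ_max)² and h_H := Δ/(γ^j Δ_max). Then: (a) if ‖∇f(x)‖ > ε_g, then every nonempty G ⊆ N with |G| ≥ ⌈(1−h_g)·d⌉ satisfies ‖∇f_G(x)‖ > 4ε_g/5; and (b) if −λ_min(∇²f(x)) > ε_H, then every nonempty H ⊆ N with |H| ≥ ⌈(1−h_H)·d⌉ satisfies −λ_min(∇²f_H(x)) > 4ε_H/5. -/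

import Mathlib

open scoped RealInnerProductSpace

/-- The spectral (ℓ²-operator) norm of a real matrix. -/
noncomputable def specNorm {n : ℕ} (A : Matrix (Fin n) (Fin n) ℝ) : ℝ :=
  ‖Matrix.toEuclideanCLM (𝕜 := ℝ) A‖

/-- The smallest eigenvalue of a (Hermitian) real matrix. -/
noncomputable def lambdaMin {n : ℕ} (A : Matrix (Fin n) (Fin n) ℝ) : ℝ :=
  if h : A.IsHermitian then ⨅ i, h.eigenvalues i else 0

/-- The Hessian matrix of `f` at `x`, given by second directional derivatives. -/
noncomputable def hessian {n : ℕ} (f : EuclideanSpace ℝ (Fin n) → ℝ)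
    (x : EuclideanSpace ℝ (Fin n)) : Matrix (Fin n) (Fin n) ℝ :=
  fun i j => iteratedFDeriv ℝ 2 f x ![EuclideanSpace.single i 1, EuclideanSpace.single j 1]

/-!
If all `‖g i‖ ≤ B` and `#G ≥ (1 - h) d`, then
`avg_G g - avg g = (1/#G - 1/d) ∑_{G} g - (1/d) ∑_{Gᶜ} g` has norm at most `2 h B`.
Apply this to the gradients `∇f_i(x)`, bounded by `L_g D_0` because `∇f_i(x_i*) = 0`, and to the
Hessians, bounded by `L_g` in spectral norm; for the Hessians combine it with Weyl's inequality
`λ_min(B) ≤ λ_min(A) + ‖B - A‖`. Both sampling fractions are at most `γ⁻ʲ`, and the choice of `j`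
makes `2 γ⁻ʲ B < ε / 5`.
-/

open Finset

section Spectral

variable {n : ℕ} {A B : Matrix (Fin n) (Fin n) ℝ}

lemma Matrix.IsHermitian.toEuclideanCLM_eigenvectorBasis (hA : A.IsHermitian) (i : Fin n) :
    Matrix.toEuclideanCLM (𝕜 := ℝ) A (hA.eigenvectorBasis i)
      = hA.eigenvalues i • hA.eigenvectorBasis i := by
  ext k; exact congrFun (hA.mulVec_eigenvectorBasis i) k

lemma lambdaMin_le_inner (hA : A.IsHermitian) {v : EuclideanSpace ℝ (Fin n)} (hv : ‖v‖ = 1) :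
    lambdaMin A ≤ ⟪v, Matrix.toEuclideanCLM (𝕜 := ℝ) A v⟫ := by
  set T := Matrix.toEuclideanCLM (𝕜 := ℝ) A
  set b := hA.eigenvectorBasis
  have hT : ∀ y w, ⟪T y, w⟫ = ⟪y, T w⟫ := Matrix.isSymmetric_toEuclideanLin_iff.mpr hA
  have hinner : ⟪v, T v⟫ = ∑ i, hA.eigenvalues i * ⟪b i, v⟫ ^ 2 := by
    rw [← b.sum_inner_mul_inner v (T v)]
    refine sum_congr rfl fun i _ => ?_
    rw [← hT, hA.toEuclideanCLM_eigenvectorBasis, real_inner_smul_left, real_inner_comm (b i) v]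
    ring
  have hnorm : ∑ i, ⟪b i, v⟫ ^ 2 = 1 := by
    have hv' := b.sum_inner_mul_inner v v
    rw [real_inner_self_eq_norm_sq, hv, one_pow] at hv'
    rw [← hv']
    exact sum_congr rfl fun i _ => by rw [real_inner_comm (b i) v, sq]
  have hmin : ∀ i, lambdaMin A ≤ hA.eigenvalues i := fun i => by
    rw [lambdaMin, dif_pos hA]
    exact ciInf_le (Finite.bddBelow_range _) i
  calc lambdaMin A = ∑ i, lambdaMin A * ⟪b i, v⟫ ^ 2 := by rw [← mul_sum, hnorm, mul_one]
    _ ≤ ∑ i, hA.eigenvalues i * ⟪b i, v⟫ ^ 2 :=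
        sum_le_sum fun i _ => mul_le_mul_of_nonneg_right (hmin i) (sq_nonneg _)
    _ = ⟪v, T v⟫ := hinner.symm

lemma exists_norm_eq_one_inner_eq_lambdaMin [NeZero n] (hA : A.IsHermitian) :
    ∃ v : EuclideanSpace ℝ (Fin n), ‖v‖ = 1 ∧
      ⟪v, Matrix.toEuclideanCLM (𝕜 := ℝ) A v⟫ = lambdaMin A := by
  obtain ⟨i, hi⟩ := exists_eq_ciInf_of_finite (f := hA.eigenvalues)
  have hunit := hA.eigenvectorBasis.orthonormal.1 i
  refine ⟨hA.eigenvectorBasis i, hunit, ?_⟩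
  rw [hA.toEuclideanCLM_eigenvectorBasis, real_inner_smul_right, real_inner_self_eq_norm_sq,
    hunit, lambdaMin, dif_pos hA, ← hi, one_pow, mul_one]

lemma lambdaMin_le_add_specNorm_sub (hA : A.IsHermitian) (hB : B.IsHermitian) :
    lambdaMin B ≤ lambdaMin A + specNorm (B - A) := by
  rcases Nat.eq_zero_or_pos n with rfl | hn
  · simp [lambdaMin, specNorm]
  have : NeZero n := ⟨hn.ne'⟩
  obtain ⟨v, hv, hvA⟩ := exists_norm_eq_one_inner_eq_lambdaMin hA
  set S := Matrix.toEuclideanCLM (𝕜 := ℝ) (B - A)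
  have hsplit : ⟪v, Matrix.toEuclideanCLM (𝕜 := ℝ) B v⟫
      = ⟪v, Matrix.toEuclideanCLM (𝕜 := ℝ) A v⟫ + ⟪v, S v⟫ := by
    simp [S, map_sub, inner_sub_right]
  have hS : ⟪v, S v⟫ ≤ specNorm (B - A) :=
    calc ⟪v, S v⟫ ≤ ‖v‖ * ‖S v‖ := real_inner_le_norm _ _
      _ ≤ ‖v‖ * (‖S‖ * ‖v‖) := by gcongr; exact S.le_opNorm v
      _ = specNorm (B - A) := by rw [hv, one_mul, mul_one]; rfl
  linarith [lambdaMin_le_inner hB hv]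

end Spectral

section Calculus

variable {E : Type*} [NormedAddCommGroup E] [InnerProductSpace ℝ E] [CompleteSpace E]
  {ι : Type*}

lemma gradient_const_mul_sum (f : ι → E → ℝ) (s : Finset ι) (c : ℝ) {x : E}
    (hf : ∀ i ∈ s, DifferentiableAt ℝ (f i) x) :
    gradient (fun y => c * ∑ i ∈ s, f i y) x = c • ∑ i ∈ s, gradient (f i) x := by
  unfold gradient
  rw [fderiv_const_mul (DifferentiableAt.fun_sum hf) c, fderiv_fun_sum hf, map_smul, map_sum]

variable {n : ℕ}

lemma hessian_const_mul_sum (f : ι → EuclideanSpace ℝ (Fin n) → ℝ) (s : Finset ι) (c : ℝ)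
    {x : EuclideanSpace ℝ (Fin n)} (hf : ∀ i ∈ s, ContDiffAt ℝ 2 (f i) x) :
    hessian (fun y => c * ∑ i ∈ s, f i y) x = c • ∑ i ∈ s, hessian (f i) x := by
  ext a b
  have hsum : ContDiffAt ℝ 2 (fun y => ∑ i ∈ s, f i y) x := ContDiffAt.sum hf
  simp only [hessian, Matrix.smul_apply, Matrix.sum_apply]
  change iteratedFDeriv ℝ 2 (fun y => c • ∑ i ∈ s, f i y) x _ = _
  rw [iteratedFDeriv_const_smul_apply' hsum, iteratedFDeriv_fun_sum_apply hf]
  simp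

lemma hessian_isHermitian {f : EuclideanSpace ℝ (Fin n) → ℝ} {x : EuclideanSpace ℝ (Fin n)}
    (hf : ContDiffAt ℝ 2 f x) : (hessian f x).IsHermitian := by
  ext i j
  simpa [hessian, iteratedFDeriv_two_apply] using
    hf.isSymmSndFDerivAt (by simp) (EuclideanSpace.single j 1) (EuclideanSpace.single i 1)

end Calculus

lemma norm_sum_le_card_mul {ι V : Type*} [NormedAddCommGroup V] {g : ι → V} {B : ℝ}
    (hg : ∀ i, ‖g i‖ ≤ B) (s : Finset ι) :
    ‖∑ i ∈ s, g i‖ ≤ #s * B :=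
  calc ‖∑ i ∈ s, g i‖ ≤ ∑ i ∈ s, ‖g i‖ := norm_sum_le _ _
    _ ≤ #s * B := by simpa using sum_le_sum fun i (_ : i ∈ s) => hg i

section Averages

variable {ι V : Type*} [Fintype ι] [DecidableEq ι] [NormedAddCommGroup V] [NormedSpace ℝ V]

lemma norm_average_sub_average_le {g : ι → V} {B : ℝ} (hg : ∀ i, ‖g i‖ ≤ B)
    {G : Finset ι} (hG : G.Nonempty) :
    ‖(#G : ℝ)⁻¹ • ∑ i ∈ G, g i - (Fintype.card ι : ℝ)⁻¹ • ∑ i, g i‖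
      ≤ 2 * ((Fintype.card ι - #G) / Fintype.card ι) * B := by
  set m : ℝ := (#G : ℝ)
  set N : ℝ := (Fintype.card ι : ℝ)
  have hm : 0 < m := by simpa [m] using hG.card_pos
  have hmN : m ≤ N := by simpa [m, N] using card_le_univ G
  have hN : 0 < N := hm.trans_le hmN
  have hcompl : (#Gᶜ : ℝ) = N - m := by simp [m, N, card_compl, Nat.cast_sub (card_le_univ G)]
  have hcoef : 0 ≤ m⁻¹ - N⁻¹ := sub_nonneg.mpr (inv_anti₀ hm hmN)
  have hsplit : m⁻¹ • ∑ i ∈ G, g i - N⁻¹ • ∑ i, g i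
      = (m⁻¹ - N⁻¹) • ∑ i ∈ G, g i - N⁻¹ • ∑ i ∈ Gᶜ, g i := by
    rw [← sum_add_sum_compl G g]; module
  calc ‖m⁻¹ • ∑ i ∈ G, g i - N⁻¹ • ∑ i, g i‖
      ≤ (m⁻¹ - N⁻¹) * ‖∑ i ∈ G, g i‖ + N⁻¹ * ‖∑ i ∈ Gᶜ, g i‖ := by
        rw [hsplit]
        refine (norm_sub_le _ _).trans_eq ?_
        rw [norm_smul, norm_smul, Real.norm_of_nonneg hcoef, Real.norm_of_nonneg (by positivity)]
    _ ≤ (m⁻¹ - N⁻¹) * (m * B) + N⁻¹ * ((N - m) * B) := by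
        gcongr
        · exact norm_sum_le_card_mul hg G
        · rw [← hcompl]; exact norm_sum_le_card_mul hg Gᶜ
    _ = 2 * ((N - m) / N) * B := by field_simp; ring

lemma card_sub_div_le_of_ceil_le {h : ℝ} {N m : ℕ} (hN : 0 < N) (hm : ⌈(1 - h) * N⌉₊ ≤ m) :
    ((N : ℝ) - m) / N ≤ h := by
  have : (1 - h) * N ≤ m := (Nat.le_ceil _).trans (by exact_mod_cast hm)
  rw [div_le_iff₀ (by positivity)]
  linarith

lemma norm_average_sub_average_le_of_ceil_le {g : ι → V} {B h : ℝ} (hg : ∀ i, ‖g i‖ ≤ B)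
    {G : Finset ι} (hG : G.Nonempty) (hcard : ⌈(1 - h) * Fintype.card ι⌉₊ ≤ #G) :
    ‖(#G : ℝ)⁻¹ • ∑ i ∈ G, g i - (Fintype.card ι : ℝ)⁻¹ • ∑ i, g i‖ ≤ 2 * h * B := by
  have hB : 0 ≤ B := (norm_nonneg _).trans (hg hG.choose)
  have hfrac := card_sub_div_le_of_ceil_le (hG.card_pos.trans_le (card_le_univ G)) hcard
  exact (norm_average_sub_average_le hg hG).trans (by gcongr)

end Averages

lemma two_mul_mul_lt_div_five {h B ε t : ℝ} (ht : 0 < t) (hh : h ≤ t⁻¹) (hB : 0 ≤ B)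
    (hε : 10 * B < ε * t) : 2 * h * B < ε / 5 := by
  have : 10 * B * t⁻¹ < ε := by rwa [mul_inv_lt_iff₀ ht]
  nlinarith [mul_le_mul_of_nonneg_right hh hB]

section Sampling

variable {ι : Type*} [Fintype ι] [DecidableEq ι] {n : ℕ}
  {f : ι → EuclideanSpace ℝ (Fin n) → ℝ} {x : EuclideanSpace ℝ (Fin n)} {B h : ℝ}
  {G : Finset ι}

lemma norm_gradient_average_le (hf : ∀ i, DifferentiableAt ℝ (f i) x)
    (hg : ∀ i, ‖gradient (f i) x‖ ≤ B) (hG : G.Nonempty)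
    (hcard : ⌈(1 - h) * Fintype.card ι⌉₊ ≤ #G) :
    ‖gradient (fun y => (Fintype.card ι : ℝ)⁻¹ * ∑ i, f i y) x‖
      ≤ ‖gradient (fun y => (#G : ℝ)⁻¹ * ∑ i ∈ G, f i y) x‖ + 2 * h * B := by
  rw [gradient_const_mul_sum f _ _ fun i _ => hf i, gradient_const_mul_sum f _ _ fun i _ => hf i]
  linarith [norm_average_sub_average_le_of_ceil_le hg hG hcard,
    norm_le_norm_add_norm_sub ((#G : ℝ)⁻¹ • ∑ i ∈ G, gradient (f i) x)
      ((Fintype.card ι : ℝ)⁻¹ • ∑ i, gradient (f i) x)]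

lemma lambdaMin_hessian_average_le (hf : ∀ i, ContDiffAt ℝ 2 (f i) x)
    (hg : ∀ i, specNorm (hessian (f i) x) ≤ B) (hG : G.Nonempty)
    (hcard : ⌈(1 - h) * Fintype.card ι⌉₊ ≤ #G) :
    lambdaMin (hessian (fun y => (#G : ℝ)⁻¹ * ∑ i ∈ G, f i y) x)
      ≤ lambdaMin (hessian (fun y => (Fintype.card ι : ℝ)⁻¹ * ∑ i, f i y) x) + 2 * h * B := by
  have hherm (s : Finset ι) (c : ℝ) : (c • ∑ i ∈ s, hessian (f i) x).IsHermitian := by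
    rw [← hessian_const_mul_sum f s c fun i _ => hf i]
    exact hessian_isHermitian (contDiffAt_const.mul (ContDiffAt.sum fun i _ => hf i))
  have hclose := norm_average_sub_average_le_of_ceil_le
    (g := fun i => Matrix.toEuclideanCLM (𝕜 := ℝ) (hessian (f i) x)) hg hG hcard
  have hweyl := lambdaMin_le_add_specNorm_sub (hherm univ (Fintype.card ι : ℝ)⁻¹)
    (hherm G (#G : ℝ)⁻¹)
  simp only [specNorm, map_sub, map_smul, map_sum] at hweyl
  simp only [hessian_const_mul_sum f _ _ fun i _ => hf i]
  linarith

end Sampling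

theorem stmt_12_general {n d : ℕ} [NeZero d]
    (f : Fin d → EuclideanSpace ℝ (Fin n) → ℝ)
    (hf : ∀ i, ContDiff ℝ 2 (f i))
    (Lg : ℝ) (hLg : 0 < Lg)
    (hlip : ∀ i, ∀ y z : EuclideanSpace ℝ (Fin n),
      ‖gradient (f i) y - gradient (f i) z‖ ≤ Lg * ‖y - z‖)
    (xstar : Fin d → EuclideanSpace ℝ (Fin n))
    (hstar : ∀ i, gradient (f i) (xstar i) = 0)
    (x : EuclideanSpace ℝ (Fin n)) (D0 : ℝ) (hD0 : 0 ≤ D0)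
    (hDx : ∀ i, ‖x - xstar i‖ ≤ D0)
    (hhess : ∀ i, specNorm (hessian (f i) x) ≤ Lg)
    (εg εH γ Δ Δmax : ℝ) (hγ : 1 < γ)
    (hΔ : 0 < Δ) (hΔmax : Δ ≤ Δmax)
    (j : ℕ) (hjg : 10 * Lg * D0 < εg * γ ^ j) (hjH : 10 * Lg < εH * γ ^ j) :
    (εg < ‖gradient (fun y => (d : ℝ)⁻¹ * ∑ i, f i y) x‖ →
      ∀ G : Finset (Fin d), G.Nonempty →
        ⌈(1 - (γ ^ j)⁻¹ * (Δ / Δmax) ^ 2) * (d : ℝ)⌉₊ ≤ G.card →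
        4 * εg / 5 < ‖gradient (fun y => ((G.card : ℝ))⁻¹ * ∑ i ∈ G, f i y) x‖) ∧
    (εH < -lambdaMin (hessian (fun y => (d : ℝ)⁻¹ * ∑ i, f i y) x) →
      ∀ H : Finset (Fin d), H.Nonempty →
        ⌈(1 - Δ / (γ ^ j * Δmax)) * (d : ℝ)⌉₊ ≤ H.card →
        4 * εH / 5 < -lambdaMin (hessian (fun y => ((H.card : ℝ))⁻¹ * ∑ i ∈ H, f i y) x)) := by
  have hγj : 0 < γ ^ j := pow_pos (zero_lt_one.trans hγ) j
  have hratio : Δ / Δmax ≤ 1 := div_le_one_of_le₀ hΔmax (hΔ.le.trans hΔmax)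
  have hratio₀ : 0 ≤ Δ / Δmax := div_nonneg hΔ.le (hΔ.le.trans hΔmax)
  have hfrac_g : (γ ^ j)⁻¹ * (Δ / Δmax) ^ 2 ≤ (γ ^ j)⁻¹ :=
    mul_le_of_le_one_right (by positivity) (pow_le_one₀ hratio₀ hratio)
  have hfrac_H : Δ / (γ ^ j * Δmax) ≤ (γ ^ j)⁻¹ := by
    rw [mul_comm, ← div_div, div_eq_mul_inv]; exact mul_le_of_le_one_left (by positivity) hratio
  refine ⟨fun hfull G hG hGcard => ?_, fun hfull H hH hHcard => ?_⟩
  · have hgrad : ∀ i, ‖gradient (f i) x‖ ≤ Lg * D0 := fun i => by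
      simpa [hstar] using (hlip i x (xstar i)).trans (by gcongr; exact hDx i)
    have hsample := norm_gradient_average_le (fun i => (hf i).differentiable (by norm_num) x)
      hgrad hG (by simpa using hGcard)
    have hsmall := two_mul_mul_lt_div_five hγj hfrac_g (mul_nonneg hLg.le hD0)
      (by rwa [← mul_assoc])
    simp only [Fintype.card_fin] at hsample
    linarith
  · have hsample := lambdaMin_hessian_average_le (fun i => (hf i).contDiffAt) hhess hH
      (by simpa using hHcard)
    have hsmall := two_mul_mul_lt_div_five hγj hfrac_H hLg.le hjH
    simp only [Fintype.card_fin] at hsample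
    linarith

theorem stmt_12 {n d : ℕ} (hn : 1 ≤ n) [NeZero d]
    (f : Fin d → EuclideanSpace ℝ (Fin n) → ℝ)
    (hf : ∀ i, ContDiff ℝ 2 (f i))
    (Lg : ℝ) (hLg : 0 < Lg)
    (hlip : ∀ i, ∀ y z : EuclideanSpace ℝ (Fin n),
      ‖gradient (f i) y - gradient (f i) z‖ ≤ Lg * ‖y - z‖)
    (xstar : Fin d → EuclideanSpace ℝ (Fin n))
    (hstar : ∀ i, gradient (f i) (xstar i) = 0)
    (x : EuclideanSpace ℝ (Fin n)) (D0 : ℝ) (hD0 : 0 ≤ D0)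
    (hDx : ∀ i, ‖x - xstar i‖ ≤ D0)
    (hhess : ∀ i, specNorm (hessian (f i) x) ≤ Lg)
    (εg εH γ Δ Δmax : ℝ) (hεg : 0 < εg) (hεH : 0 < εH) (hγ : 1 < γ)
    (hΔ : 0 < Δ) (hΔmax : Δ ≤ Δmax)
    (j : ℕ) (hjg : 10 * Lg * D0 < εg * γ ^ j) (hjH : 10 * Lg < εH * γ ^ j) :
    (εg < ‖gradient (fun y => (d : ℝ)⁻¹ * ∑ i, f i y) x‖ →
      ∀ G : Finset (Fin d), G.Nonempty →
        ⌈(1 - (γ ^ j)⁻¹ * (Δ / Δmax) ^ 2) * (d : ℝ)⌉₊ ≤ G.card →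
        4 * εg / 5 < ‖gradient (fun y => ((G.card : ℝ))⁻¹ * ∑ i ∈ G, f i y) x‖) ∧
    (εH < -lambdaMin (hessian (fun y => (d : ℝ)⁻¹ * ∑ i, f i y) x) →
      ∀ H : Finset (Fin d), H.Nonempty →
        ⌈(1 - Δ / (γ ^ j * Δmax)) * (d : ℝ)⌉₊ ≤ H.card →
        4 * εH / 5 < -lambdaMin (hessian (fun y => ((H.card : ℝ))⁻¹ * ∑ i ∈ H, f i y) x)) :=
  stmt_12_general f hf Lg hLg hlip xstar hstar x D0 hD0 hDx hhess εg εH γ Δ Δmax hγ hΔ hΔmax j hjg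
    hjH
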